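/- arXiv:1911.12452 — 2 statements merged into one kernel-verified Lean document; each statement's English description precedes it below -/
import Mathlib

section
/- Fix positive reals s₁ < ⋯ < s_N and positive reals c₁,…,c_N, and g(λ) = Σᵢ sᵢcᵢ/(λ − sᵢ)². If K > 0 is smaller than the infimum of g over the set (s₁, s_N) \ {s₂,…,s_{N−1}}, then the equation g(λ) = K has exactly 2 real solutions, one in (−∞, s₁) and one in (s_N, ∞). -/
/-!
On each side of the poles, `g λ = ∑ i, a i / (λ - t i) ^ 2` with positive weights is a sum of
strictly monotone continuous functions, tends to `0` at infinity and blows up at the outermost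
pole; so by the intermediate value theorem it takes every positive value exactly once there.
The reflection `λ ↦ -λ`, `t ↦ -t` reduces the right side to the left one. Between the outermost
poles `g > K` by hypothesis, so there are no further solutions.
-/

open Filter Set Topology

section SumDivSq

variable {ι : Type*} [Fintype ι] {a t : ι → ℝ}

lemma strictMonoOn_sum_div_sq_Iio [Nonempty ι] {T : ℝ} (ha : ∀ i, 0 < a i)
    (ht : ∀ i, T ≤ t i) : StrictMonoOn (fun x => ∑ i, a i / (x - t i) ^ 2) (Iio T) := by
  intro x hx y hy hxy
  refine Finset.sum_lt_sum_of_nonempty Finset.univ_nonempty fun i _ => ?_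
  have hyt : y - t i < 0 := by linarith [mem_Iio.1 hy, ht i]
  exact div_lt_div_of_pos_left (ha i) (sq_pos_of_neg hyt) (by nlinarith)

lemma continuousOn_sum_div_sq_Iio {T : ℝ} (ht : ∀ i, T ≤ t i) :
    ContinuousOn (fun x => ∑ i, a i / (x - t i) ^ 2) (Iio T) :=
  continuousOn_finsetSum _ fun i _ => continuousOn_const.div (by fun_prop) fun _ hx =>
    pow_ne_zero 2 (sub_ne_zero.2 (hx.trans_le (ht i)).ne)

lemma tendsto_sum_div_sq_atBot :
    Tendsto (fun x => ∑ i, a i / (x - t i) ^ 2) atBot (𝓝 0) := by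
  have hterm (i : ι) : Tendsto (fun x => a i / (x - t i) ^ 2) atBot (𝓝 0) := by
    have hsub : Tendsto (fun x => x - t i) atBot atBot :=
      tendsto_atBot_add_const_right _ (-t i) tendsto_id
    exact tendsto_const_nhds.div_atTop (by simpa only [sq] using hsub.atBot_mul_atBot₀ hsub)
  simpa using tendsto_finsetSum Finset.univ fun i _ => hterm i

lemma tendsto_sum_div_sq_nhdsLT (ha : ∀ i, 0 ≤ a i) {i₀ : ι} (hi₀ : 0 < a i₀) :
    Tendsto (fun x => ∑ i, a i / (x - t i) ^ 2) (𝓝[<] t i₀) atTop := by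
  have hsq : Tendsto (fun x => (x - t i₀) ^ 2) (𝓝[<] t i₀) (𝓝[>] 0) := by
    refine tendsto_nhdsWithin_iff.2 ⟨?_, ?_⟩
    · exact ((continuous_sub_right (t i₀)).pow 2).tendsto' _ _ (by simp) |>.mono_left
        nhdsWithin_le_nhds
    · filter_upwards [self_mem_nhdsWithin] with x hx
      exact sq_pos_of_neg (sub_neg.2 (mem_Iio.1 hx))
  refine tendsto_atTop_mono (fun x => Finset.single_le_sum (f := fun i => a i / (x - t i) ^ 2)
    (fun i _ => div_nonneg (ha i) (sq_nonneg _)) (Finset.mem_univ i₀)) ?_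
  exact (hsq.inv_tendsto_nhdsGT_zero.const_mul_atTop hi₀).congr fun x => (div_eq_mul_inv _ _).symm

lemma existsUnique_sum_div_sq_eq_of_lt {i₀ : ι} (ha : ∀ i, 0 < a i) (ht : ∀ i, t i₀ ≤ t i)
    {K : ℝ} (hK : 0 < K) : ∃! x, x < t i₀ ∧ ∑ i, a i / (x - t i) ^ 2 = K := by
  have : Nonempty ι := ⟨i₀⟩
  obtain ⟨x, hx, hxK⟩ : K ∈ (fun x => ∑ i, a i / (x - t i) ^ 2) '' Iio (t i₀) :=
    isPreconnected_Iio.intermediate_value_Ioi (l₂ := 𝓝[<] t i₀)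
      (le_principal_iff.2 (Iio_mem_atBot _)) inf_le_right (continuousOn_sum_div_sq_Iio ht)
      tendsto_sum_div_sq_atBot
      (tendsto_sum_div_sq_nhdsLT (fun i => (ha i).le) (ha i₀)) hK
  exact ⟨x, ⟨hx, hxK⟩, fun y hy => (strictMonoOn_sum_div_sq_Iio ha ht).injOn hy.1 hx
    (hy.2.trans hxK.symm)⟩

lemma existsUnique_sum_div_sq_eq_of_gt {i₀ : ι} (ha : ∀ i, 0 < a i) (ht : ∀ i, t i ≤ t i₀)
    {K : ℝ} (hK : 0 < K) : ∃! x, t i₀ < x ∧ ∑ i, a i / (x - t i) ^ 2 = K := by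
  refine (Equiv.neg ℝ).existsUnique_congr (fun x => ?_) |>.1
    (existsUnique_sum_div_sq_eq_of_lt (t := -t) ha (fun i => neg_le_neg (ht i)) hK)
  simp only [Pi.neg_apply, Equiv.neg_apply, lt_neg, sub_neg_eq_add, neg_sub_left, neg_sq,
    add_comm]

end SumDivSq

theorem stmt_8 (N : ℕ) (hN : 0 < N) (s c : Fin N → ℝ) (hs : StrictMono s)
    (hspos : ∀ i, 0 < s i) (hc : ∀ i, 0 < c i) (K : ℝ) (hK : 0 < K)
    (hKsmall : ∀ lam ∈ Set.Ioo (s ⟨0, hN⟩) (s ⟨N - 1, by omega⟩),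
      (∀ i, lam ≠ s i) → K < ∑ i, s i * c i / (lam - s i)^2) :
    (∃! lam : ℝ, lam < s ⟨0, hN⟩ ∧ (∑ i, s i * c i / (lam - s i)^2) = K) ∧
    (∃! lam : ℝ, s ⟨N - 1, by omega⟩ < lam ∧ (∑ i, s i * c i / (lam - s i)^2) = K) ∧
    (∀ lam : ℝ, (∀ i, lam ≠ s i) → (∑ i, s i * c i / (lam - s i)^2) = K →
      lam < s ⟨0, hN⟩ ∨ s ⟨N - 1, by omega⟩ < lam) := by
  have ha (i : Fin N) : 0 < s i * c i := mul_pos (hspos i) (hc i)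
  refine ⟨existsUnique_sum_div_sq_eq_of_lt ha (fun i => hs.monotone (Nat.zero_le i.1)) hK,
    existsUnique_sum_div_sq_eq_of_gt (t := s) (i₀ := ⟨N - 1, by omega⟩) ha
      (fun i => hs.monotone (Nat.le_sub_one_of_lt i.2)) hK, ?_⟩
  intro lam hne hlam
  by_contra! hmid
  exact (hKsmall lam ⟨hmid.1.lt_of_ne (hne _).symm, hmid.2.lt_of_ne (hne _)⟩ hne).ne' hlam
end

section
/- Let A be an M×N real matrix, b ∈ ℝ^M, and suppose λ₁ < λ₂ are reals not in the spectrum of AᵀA, with xᵢ = (AᵀA − λᵢI)⁻¹Aᵀb for i = 1,2 both satisfying ‖x₁‖ = ‖x₂‖. Then H(x₁) ≤ H(x₂), where H(x) = (1/2)‖Ax − b‖². -/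
/-!
Put `B = AᵀA` and `c = Aᵀb`, so that `B xᵢ = λᵢ xᵢ + c`. Substituting this into
`‖Ax - b‖² = x ⬝ Bx - 2 x ⬝ c + ‖b‖²` gives `‖Axᵢ - b‖² = λᵢ ‖xᵢ‖² - xᵢ ⬝ c + ‖b‖²`, and the
symmetry `x₁ ⬝ Bx₂ = x₂ ⬝ Bx₁` gives `x₂ ⬝ c - x₁ ⬝ c = (λ₂ - λ₁) x₁ ⬝ x₂`. Hence, when
`‖x₁‖ = ‖x₂‖ = r`, the two residuals differ by `(λ₂ - λ₁)(r² - x₁ ⬝ x₂) = (λ₂ - λ₁) ‖x₁ - x₂‖² / 2 ≥ 0`.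
-/

open Matrix

namespace Matrix

variable {m n R : Type*} [Fintype m] [Fintype n]

lemma mulVec_nonsing_inv_mulVec [DecidableEq n] [CommRing R] {C : Matrix n n R} (hC : IsUnit C)
    (v : n → R) : C *ᵥ (C⁻¹ *ᵥ v) = v := by
  rw [mulVec_mulVec, mul_nonsing_inv C ((isUnit_iff_isUnit_det C).mp hC), one_mulVec]

lemma mulVec_eq_smul_add_of_shift_inv [DecidableEq n] [CommRing R] {B : Matrix n n R} {μ : R}
    (hB : IsUnit (B - μ • 1)) (c : n → R) :
    B *ᵥ ((B - μ • 1)⁻¹ *ᵥ c) = μ • ((B - μ • 1)⁻¹ *ᵥ c) + c := by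
  have h := mulVec_nonsing_inv_mulVec hB c
  rw [sub_mulVec, smul_mulVec, one_mulVec] at h
  exact eq_add_of_sub_eq' h

lemma dotProduct_transpose_mul_self_mulVec [CommSemiring R] (A : Matrix m n R) (u w : n → R) :
    u ⬝ᵥ (Aᵀ * A) *ᵥ w = A *ᵥ u ⬝ᵥ A *ᵥ w := by
  rw [← mulVec_mulVec, dotProduct_mulVec, vecMul_transpose]

lemma two_mul_dotProduct_le_add [CommRing R] [LinearOrder R] [IsStrictOrderedRing R]
    (u v : n → R) : 2 * (u ⬝ᵥ v) ≤ u ⬝ᵥ u + v ⬝ᵥ v := by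
  have h : 0 ≤ (u - v) ⬝ᵥ (u - v) := Finset.sum_nonneg fun i _ => mul_self_nonneg _
  rw [sub_dotProduct, dotProduct_sub, dotProduct_sub, dotProduct_comm v u] at h
  linarith

section Secular

variable [CommRing R] {A : Matrix m n R} {b : m → R}

lemma residual_eq_of_mulVec_eq {μ : R} {x : n → R} (hx : (Aᵀ * A) *ᵥ x = μ • x + Aᵀ *ᵥ b) :
    (A *ᵥ x - b) ⬝ᵥ (A *ᵥ x - b) = μ * (x ⬝ᵥ x) - x ⬝ᵥ Aᵀ *ᵥ b + b ⬝ᵥ b := by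
  have hAx : A *ᵥ x ⬝ᵥ A *ᵥ x = μ * (x ⬝ᵥ x) + x ⬝ᵥ Aᵀ *ᵥ b := by
    rw [← dotProduct_transpose_mul_self_mulVec, hx, dotProduct_add, dotProduct_smul, smul_eq_mul]
  have hb : A *ᵥ x ⬝ᵥ b = x ⬝ᵥ Aᵀ *ᵥ b := by
    rw [dotProduct_mulVec, vecMul_transpose]
  rw [sub_dotProduct, dotProduct_sub, dotProduct_sub, dotProduct_comm b, hAx, hb]
  ring

lemma dotProduct_sub_dotProduct_of_mulVec_eq {μ₁ μ₂ : R} {x₁ x₂ : n → R}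
    (h₁ : (Aᵀ * A) *ᵥ x₁ = μ₁ • x₁ + Aᵀ *ᵥ b) (h₂ : (Aᵀ * A) *ᵥ x₂ = μ₂ • x₂ + Aᵀ *ᵥ b) :
    x₂ ⬝ᵥ Aᵀ *ᵥ b - x₁ ⬝ᵥ Aᵀ *ᵥ b = (μ₂ - μ₁) * (x₁ ⬝ᵥ x₂) := by
  have hsymm : x₁ ⬝ᵥ (Aᵀ * A) *ᵥ x₂ = x₂ ⬝ᵥ (Aᵀ * A) *ᵥ x₁ := by
    rw [dotProduct_transpose_mul_self_mulVec, dotProduct_transpose_mul_self_mulVec, dotProduct_comm]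
  rw [h₁, h₂, dotProduct_add, dotProduct_add, dotProduct_smul, dotProduct_smul, smul_eq_mul,
    smul_eq_mul, dotProduct_comm x₂ x₁] at hsymm
  linear_combination -hsymm

lemma residual_le_of_mulVec_eq [LinearOrder R] [IsStrictOrderedRing R] {μ₁ μ₂ : R}
    (hμ : μ₁ ≤ μ₂) {x₁ x₂ : n → R}
    (h₁ : (Aᵀ * A) *ᵥ x₁ = μ₁ • x₁ + Aᵀ *ᵥ b) (h₂ : (Aᵀ * A) *ᵥ x₂ = μ₂ • x₂ + Aᵀ *ᵥ b)
    (hnorm : x₁ ⬝ᵥ x₁ = x₂ ⬝ᵥ x₂) :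
    (A *ᵥ x₁ - b) ⬝ᵥ (A *ᵥ x₁ - b) ≤ (A *ᵥ x₂ - b) ⬝ᵥ (A *ᵥ x₂ - b) := by
  have hcross := dotProduct_sub_dotProduct_of_mulVec_eq h₁ h₂
  have hCS := two_mul_dotProduct_le_add x₁ x₂
  rw [residual_eq_of_mulVec_eq h₁, residual_eq_of_mulVec_eq h₂, ← hnorm]
  nlinarith [mul_le_mul_of_nonneg_left hCS (sub_nonneg.mpr hμ)]

end Secular

end Matrix

theorem stmt_9 (M N : ℕ) (A : Matrix (Fin M) (Fin N) ℝ) (b : Fin M → ℝ)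
    (lam₁ lam₂ : ℝ) (hlt : lam₁ < lam₂)
    (h₁ : IsUnit (Aᵀ * A - lam₁ • (1 : Matrix (Fin N) (Fin N) ℝ)))
    (h₂ : IsUnit (Aᵀ * A - lam₂ • (1 : Matrix (Fin N) (Fin N) ℝ)))
    (x₁ x₂ : Fin N → ℝ)
    (hx₁ : x₁ = (Aᵀ * A - lam₁ • (1 : Matrix (Fin N) (Fin N) ℝ))⁻¹.mulVec (Aᵀ.mulVec b))
    (hx₂ : x₂ = (Aᵀ * A - lam₂ • (1 : Matrix (Fin N) (Fin N) ℝ))⁻¹.mulVec (Aᵀ.mulVec b))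
    (hnorm : x₁ ⬝ᵥ x₁ = x₂ ⬝ᵥ x₂) :
    (1/2) * ((A.mulVec x₁ - b) ⬝ᵥ (A.mulVec x₁ - b)) ≤
      (1/2) * ((A.mulVec x₂ - b) ⬝ᵥ (A.mulVec x₂ - b)) := by
  subst hx₁ hx₂
  have hres := residual_le_of_mulVec_eq hlt.le (mulVec_eq_smul_add_of_shift_inv h₁ _)
    (mulVec_eq_smul_add_of_shift_inv h₂ _) hnorm
  linarith
end
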